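/- Fix k ≥ 1 and nonempty binary words u_1,…,u_k, v_1,…,v_k. With M(u) = [[3^{|u|},0],[int(u),1]] ∈ ℕ^{2×2}, define A_i = blockdiag(M(u_i), M(u_i), M(v_i)) ∈ ℕ^{6×6} for 1 ≤ i ≤ k; let B ∈ ℕ^{6×6} have rows 1 and 2 equal to (int(u₁), 1, int(u₁), 1, 0, 0), rows 3 and 4 equal to (0, 0, int(u₁), 1, 0, 0), and rows 5 and 6 equal to (0, 0, 0, 0, int(v₁), 1); and let C ∈ ℕ^{6×6} have C_{3,1} = C_{5,1} = 1 and all other entries 0. Then for every t ≥ 1 and all indices i_2,…,i_t ∈ {1,…,k}, writing u = u_{i_2}⋯u_{i_t} and v = v_{i_2}⋯v_{i_t} (empty words when t = 1), the product B·A_{i_2}·A_{i_3}⋯A_{i_t}·C is the matrix whose first column is (int(u₁u), int(u₁u), int(u₁u), int(u₁u), int(v₁v), int(v₁v))ᵀ and all of whose other entries are 0; consequently this product is synchronizing if and only if int(u₁u) = int(v₁v) and int(u₁u) ≠ 0. -/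
import Mathlib


/-- The value of a binary word (most significant digit first) read as a ternary number. -/
def ternVal (u : List Bool) : ℕ :=
  u.foldl (fun a b => 3 * a + cond b 1 0) 0

/-- `M(u) = [[3^{|u|}, 0],[int(u), 1]]`. -/
def Mword (u : List Bool) : Matrix (Fin 2) (Fin 2) ℕ :=
  !![3 ^ u.length, 0; ternVal u, 1]

/-- The `6 × 6` block-diagonal matrix with `2 × 2` diagonal blocks `X, Y, Z`. -/
def blockDiag3 (X Y Z : Matrix (Fin 2) (Fin 2) ℕ) : Matrix (Fin 6) (Fin 6) ℕ :=
  !![X 0 0, X 0 1, 0, 0, 0, 0;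
     X 1 0, X 1 1, 0, 0, 0, 0;
     0, 0, Y 0 0, Y 0 1, 0, 0;
     0, 0, Y 1 0, Y 1 1, 0, 0;
     0, 0, 0, 0, Z 0 0, Z 0 1;
     0, 0, 0, 0, Z 1 0, Z 1 1]

/-- The matrix `B` whose rows 1 and 2 are `(int u₁, 1, int u₁, 1, 0, 0)`, whose rows 3 and 4
are `(0, 0, int u₁, 1, 0, 0)`, and whose rows 5 and 6 are `(0, 0, 0, 0, int v₁, 1)`. -/
def Bbig (u₁ v₁ : List Bool) : Matrix (Fin 6) (Fin 6) ℕ :=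
  !![ternVal u₁, 1, ternVal u₁, 1, 0, 0;
     ternVal u₁, 1, ternVal u₁, 1, 0, 0;
     0, 0, ternVal u₁, 1, 0, 0;
     0, 0, ternVal u₁, 1, 0, 0;
     0, 0, 0, 0, ternVal v₁, 1;
     0, 0, 0, 0, ternVal v₁, 1]

/-- The matrix `C` with `C_{3,1} = C_{5,1} = 1` (1-indexed) and all other entries `0`. -/
def Cmat : Matrix (Fin 6) (Fin 6) ℕ :=
  !![0,0,0,0,0,0;
     0,0,0,0,0,0;
     1,0,0,0,0,0;
     0,0,0,0,0,0;
     1,0,0,0,0,0;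
     0,0,0,0,0,0]

/-- A matrix is *synchronizing* if there is a column index `i` such that an entry `A j k` is
nonzero exactly when `k = i`, and all entries of that column coincide. -/
def IsSync (A : Matrix (Fin 6) (Fin 6) ℕ) : Prop :=
  ∃ i, (∀ j k, A j k ≠ 0 ↔ k = i) ∧ (∀ j j', A j i = A j' i)

set_option maxRecDepth 2000

lemma fin6_two : (2 : Fin 6) = Fin.succ (Fin.succ 0) := rfl
lemma fin6_three : (3 : Fin 6) = Fin.succ (Fin.succ (Fin.succ 0)) := rfl
lemma fin6_four : (4 : Fin 6) = Fin.succ (Fin.succ (Fin.succ (Fin.succ 0))) := rfl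
lemma fin6_five : (5 : Fin 6) = Fin.succ (Fin.succ (Fin.succ (Fin.succ (Fin.succ 0)))) := rfl

lemma ternVal_foldl (y : List Bool) : ∀ c : ℕ,
    y.foldl (fun a b => 3 * a + cond b 1 0) c = 3 ^ y.length * c + ternVal y := by
  induction y with
  | nil => intro c; simp only [List.foldl_nil, List.length_nil, pow_zero, one_mul, ternVal, add_zero]
  | cons h t ih =>
    intro c
    have h2 : ternVal (h :: t) = 3 ^ t.length * (cond h 1 0) + ternVal t := by
      show List.foldl _ 0 (h :: t) = _
      rw [List.foldl_cons]
      simpa using ih (cond h 1 0)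
    rw [List.foldl_cons, ih, h2, List.length_cons]
    ring

lemma ternVal_append (x y : List Bool) :
    ternVal (x ++ y) = 3 ^ y.length * ternVal x + ternVal y := by
  unfold ternVal
  rw [List.foldl_append]
  exact ternVal_foldl y _

lemma Mword_append (x y : List Bool) : Mword (x ++ y) = Mword x * Mword y := by
  ext i j
  fin_cases i <;> fin_cases j <;>
    simp [Mword, Matrix.mul_apply, Fin.sum_univ_two, ternVal_append, List.length_append,
      pow_add] <;> ring

lemma Mword_nil : Mword ([] : List Bool) = 1 := by
  ext i j
  fin_cases i <;> fin_cases j <;> simp [Mword, ternVal, Matrix.one_apply]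

lemma blockDiag3_one : blockDiag3 1 1 1 = 1 := by
  ext i j
  fin_cases i <;> fin_cases j <;> simp [blockDiag3, Matrix.one_apply, fin6_two, fin6_three, fin6_four, fin6_five, Matrix.cons_val_succ, Matrix.vecHead, Matrix.vecTail]

lemma blockDiag3_mul (X Y Z X' Y' Z' : Matrix (Fin 2) (Fin 2) ℕ) :
    blockDiag3 X Y Z * blockDiag3 X' Y' Z' = blockDiag3 (X * X') (Y * Y') (Z * Z') := by
  ext i j
  fin_cases i <;> fin_cases j <;>
    simp [blockDiag3, Matrix.mul_apply, Fin.sum_univ_six, Fin.sum_univ_two, fin6_two, fin6_three, fin6_four, fin6_five, Matrix.cons_val_succ, Matrix.vecHead, Matrix.vecTail]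

lemma prod_blockDiag3 {k : ℕ} (u v : Fin k → List Bool) (l : List (Fin k)) :
    (l.map fun i => blockDiag3 (Mword (u i)) (Mword (u i)) (Mword (v i))).prod =
      blockDiag3 (Mword ((l.map u).flatten)) (Mword ((l.map u).flatten))
        (Mword ((l.map v).flatten)) := by
  induction l with
  | nil => simp [Mword_nil, blockDiag3_one]
  | cons h t ih =>
    simp only [List.map_cons, List.prod_cons, ih, List.flatten_cons, Mword_append,
      blockDiag3_mul]

lemma B_mul_blockDiag (u₁ v₁ U V : List Bool) :
    Bbig u₁ v₁ * blockDiag3 (Mword U) (Mword U) (Mword V) = Bbig (u₁ ++ U) (v₁ ++ V) := by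
  ext i j
  fin_cases i <;> fin_cases j <;>
    simp [Bbig, blockDiag3, Mword, Matrix.mul_apply, Fin.sum_univ_six, ternVal_append,
      fin6_two, fin6_three, fin6_four, fin6_five, Matrix.cons_val_succ, Matrix.vecHead,
      Matrix.vecTail] <;> ring

lemma B_mul_C (x y : List Bool) :
    Bbig x y * Cmat =
      !![ternVal x,0,0,0,0,0;
         ternVal x,0,0,0,0,0;
         ternVal x,0,0,0,0,0;
         ternVal x,0,0,0,0,0;
         ternVal y,0,0,0,0,0;
         ternVal y,0,0,0,0,0] := by
  ext i j
  fin_cases i <;> fin_cases j <;>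
    simp [Bbig, Cmat, Matrix.mul_apply, Fin.sum_univ_six,
      fin6_two, fin6_three, fin6_four, fin6_five, Matrix.cons_val_succ, Matrix.vecHead,
      Matrix.vecTail]

lemma isSync_iff (a b : ℕ) :
    IsSync !![a,0,0,0,0,0; a,0,0,0,0,0; a,0,0,0,0,0; a,0,0,0,0,0;
              b,0,0,0,0,0; b,0,0,0,0,0] ↔ a = b ∧ a ≠ 0 := by
  constructor
  · rintro ⟨i, h1, h2⟩
    have ha : ¬ ((0 : Fin 6) = i) → False := by
      intro hne
      have := (h1 0 i).mpr rfl
      fin_cases i <;> simp_all [fin6_two, fin6_three, fin6_four, fin6_five, Matrix.cons_val_succ, Matrix.vecHead, Matrix.vecTail]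
    have hi : (0 : Fin 6) = i := by by_contra h; exact ha h
    subst hi
    have hane : a ≠ 0 := (h1 0 0).mpr rfl
    have hab : a = b := h2 0 4
    exact ⟨hab, hane⟩
  · rintro ⟨hab, ha⟩
    refine ⟨0, ?_, ?_⟩
    · intro j kk
      fin_cases j <;> fin_cases kk <;> simp_all [fin6_two, fin6_three, fin6_four, fin6_five, Matrix.cons_val_succ, Matrix.vecHead, Matrix.vecTail]
    · intro j j'
      fin_cases j <;> fin_cases j' <;> simp_all [fin6_two, fin6_three, fin6_four, fin6_five, Matrix.cons_val_succ, Matrix.vecHead, Matrix.vecTail]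

/-- For any index sequence `i_2, …, i_t`, writing `u = u_{i_2} ⋯ u_{i_t}` and
`v = v_{i_2} ⋯ v_{i_t}`, the product `B · A_{i_2} ⋯ A_{i_t} · C` has first column
`(int(u₁u), int(u₁u), int(u₁u), int(u₁u), int(v₁v), int(v₁v))ᵀ` and all other entries `0`;
consequently it is synchronizing iff `int(u₁u) = int(v₁v)` and `int(u₁u) ≠ 0`. -/

theorem B_prodA_C_form {k : ℕ} (hk : 1 ≤ k) (u v : Fin k → List Bool)
    (hu : ∀ i, u i ≠ []) (hv : ∀ i, v i ≠ [])
    (l : List (Fin k)) :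
    ∀ a b : ℕ,
      a = ternVal (u ⟨0, hk⟩ ++ (l.map u).flatten) →
      b = ternVal (v ⟨0, hk⟩ ++ (l.map v).flatten) →
      Bbig (u ⟨0, hk⟩) (v ⟨0, hk⟩) *
          (l.map fun i => blockDiag3 (Mword (u i)) (Mword (u i)) (Mword (v i))).prod *
          Cmat =
        !![a,0,0,0,0,0;
           a,0,0,0,0,0;
           a,0,0,0,0,0;
           a,0,0,0,0,0;
           b,0,0,0,0,0;
           b,0,0,0,0,0] ∧
      (IsSync (Bbig (u ⟨0, hk⟩) (v ⟨0, hk⟩) *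
            (l.map fun i => blockDiag3 (Mword (u i)) (Mword (u i)) (Mword (v i))).prod *
            Cmat) ↔
        a = b ∧ a ≠ 0) := by
  intro a b ha hb
  subst ha hb
  rw [prod_blockDiag3, B_mul_blockDiag, B_mul_C]
  exact ⟨rfl, isSync_iff _ _⟩
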